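/- arXiv:2303.17844 — 2 statements merged into one kernel-verified Lean document; each statement's English description precedes it below -/
import Mathlib

section
/- For every α ∈ (0,1) and every positive integer N, ∫₀^∞ (1 − e^{−Ns}) (1 − e^{−s})^{−1−α} e^{−s} ds = ∑_{i=1}^{N} B(1−α, i), where B denotes the (real) Beta function. In particular, when r and k are positive integers, I(r,k) = ∑_{i=1}^{rk} B(1−α, i). -/
open MeasureTheory Real Set

/-- The Beta function `B(x,y) = ∫₀^1 t^{x−1} (1−t)^{y−1} dt`. -/
noncomputable def betaFn (x y : ℝ) : ℝ :=
  ∫ t in Ioo (0:ℝ) 1, t ^ (x - 1) * (1 - t) ^ (y - 1)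

lemma image_aux : (fun s : ℝ => 1 - exp (-s)) '' Ioi 0 = Ioo 0 1 := by
  ext t
  constructor
  · rintro ⟨s, hs, rfl⟩
    have h1 : exp (-s) < 1 := by
      rw [← Real.exp_zero]
      exact Real.exp_lt_exp.mpr (by simpa using (mem_Ioi.mp hs))
    have h0 : 0 < exp (-s) := exp_pos _
    exact ⟨show (0:ℝ) < 1 - exp (-s) by linarith, show (1:ℝ) - exp (-s) < 1 by linarith⟩
  · rintro ⟨h0, h1⟩
    refine ⟨-Real.log (1 - t), ?_, ?_⟩
    · have hl : Real.log (1 - t) < 0 :=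
        Real.log_neg (show (0:ℝ) < 1 - t by linarith) (show (1:ℝ) - t < 1 by linarith)
      simpa using hl
    · simp [Real.exp_log (by linarith : (0:ℝ) < 1 - t)]

lemma deriv_aux : ∀ s ∈ Ioi (0:ℝ),
    HasDerivWithinAt (fun s : ℝ => 1 - exp (-s)) (exp (-s)) (Ioi 0) s := by
  intro s _
  have h : HasDerivAt (fun s : ℝ => exp (-s)) (exp (-s) * (-1)) s :=
    (Real.hasDerivAt_exp (-s)).comp s (hasDerivAt_neg s)
  have h2 : HasDerivAt (fun s : ℝ => 1 - exp (-s)) (-(exp (-s) * (-1))) s :=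
    h.const_sub 1
  simpa using h2.hasDerivWithinAt

lemma inj_aux : InjOn (fun s : ℝ => 1 - exp (-s)) (Ioi 0) := by
  intro a _ b _ h
  simp only [sub_right_inj] at h
  have := Real.exp_injective h
  linarith

lemma beta_eq (α : ℝ) (hα : α ∈ Ioo (0:ℝ) 1) (i : ℕ) (hi : 1 ≤ i) :
    IntegrableOn (fun s => exp (-((i:ℝ)*s)) * (1 - exp (-s)) ^ (-α)) (Ioi 0) volume ∧
    (∫ s in Ioi (0:ℝ), exp (-((i:ℝ)*s)) * (1 - exp (-s)) ^ (-α)) = betaFn (1-α) (i:ℝ) := by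
  obtain ⟨hα0, hα1⟩ := hα
  set g : ℝ → ℝ := fun t => t ^ (-α) * (1 - t) ^ ((i:ℝ) - 1) with hg
  -- betaFn equals integral of g
  have hbeta : betaFn (1-α) (i:ℝ) = ∫ t in Ioo (0:ℝ) 1, g t := by
    unfold betaFn
    congr 1
    ext t
    rw [hg]
    norm_num
  -- integrability of g on Ioo 0 1
  have hint0 : IntegrableOn (fun t : ℝ => t ^ (-α)) (Ioo (0:ℝ) 1) volume := by
    have h := intervalIntegral.intervalIntegrable_rpow' (a := 0) (b := 1) (r := -α)
      (by linarith)
    rw [intervalIntegrable_iff_integrableOn_Ioc_of_le (by norm_num)] at h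
    exact h.mono_set Ioo_subset_Ioc_self
  have hgmeas : AEStronglyMeasurable g (volume.restrict (Ioo (0:ℝ) 1)) := by
    apply Measurable.aestronglyMeasurable
    rw [hg]; fun_prop
  have hgint : IntegrableOn g (Ioo (0:ℝ) 1) volume := by
    apply Integrable.mono hint0 hgmeas
    filter_upwards [ae_restrict_mem measurableSet_Ioo] with t ht
    obtain ⟨ht0, ht1⟩ := ht
    have h1 : (1 - t) ^ ((i:ℝ) - 1) ≤ 1 := by
      apply Real.rpow_le_one (by linarith) (by linarith)
      have : (1:ℝ) ≤ (i:ℝ) := by exact_mod_cast hi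
      linarith
    have h2 : 0 ≤ (1 - t) ^ ((i:ℝ) - 1) := Real.rpow_nonneg (by linarith) _
    have h3 : 0 ≤ t ^ (-α) := Real.rpow_nonneg ht0.le _
    rw [hg]
    simp only [Real.norm_eq_abs, abs_mul, abs_of_nonneg h3, abs_of_nonneg h2]
    nlinarith
  -- pointwise identity for the substituted integrand on Ioi 0
  have hpt : ∀ s ∈ Ioi (0:ℝ),
      |exp (-s)| • g (1 - exp (-s)) = exp (-((i:ℝ)*s)) * (1 - exp (-s)) ^ (-α) := by
    intro s hs
    have hx0 : 0 < exp (-s) := exp_pos _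
    rw [hg]
    simp only [smul_eq_mul, abs_of_pos hx0, sub_sub_cancel]
    have h1 : exp (-s) ^ ((i:ℝ) - 1) = exp (-s * ((i:ℝ) - 1)) := (Real.exp_mul _ _).symm
    rw [h1]
    have h2 : exp (-s) * exp (-s * ((i:ℝ) - 1)) = exp (-((i:ℝ)*s)) := by
      rw [← Real.exp_add]; congr 1; ring
    linear_combination ((1 - exp (-s)) ^ (-α)) * h2
  constructor
  · have h := (integrableOn_image_iff_integrableOn_abs_deriv_smul measurableSet_Ioi
      deriv_aux inj_aux g)
    rw [image_aux] at h
    have h2 := h.mp hgint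
    apply h2.congr_fun _ measurableSet_Ioi
    intro s hs
    exact hpt s hs
  · rw [hbeta, ← image_aux,
      integral_image_eq_integral_abs_deriv_smul measurableSet_Ioi deriv_aux inj_aux g]
    exact setIntegral_congr_fun measurableSet_Ioi (fun s hs => (hpt s hs).symm)

lemma pointwise_aux (α : ℝ) (N : ℕ) (s : ℝ) (hs : s ∈ Ioi (0:ℝ)) :
    (1 - exp (-((N:ℝ)*s))) * (1 - exp (-s)) ^ (-(1+α)) * exp (-s)
      = ∑ i ∈ Finset.Icc 1 N, exp (-((i:ℝ)*s)) * (1 - exp (-s)) ^ (-α) := by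
  have hs' : 0 < s := hs
  set x := exp (-s) with hx
  have hx0 : 0 < x := exp_pos _
  have hx1 : x < 1 := by
    rw [hx, ← Real.exp_zero]
    exact Real.exp_lt_exp.mpr (by linarith)
  have hpos : 0 < 1 - x := by linarith
  have hxpow : ∀ n : ℕ, exp (-((n:ℝ)*s)) = x ^ n := by
    intro n
    rw [hx, show -((n:ℝ)*s) = (n:ℝ) * (-s) by ring, Real.exp_nat_mul]
  have hg : (1:ℝ) - x ^ N = (1 - x) * ∑ j ∈ Finset.range N, x ^ j := by
    linear_combination geom_sum_mul x N
  have hr : (1 - x) * (1 - x) ^ (-(1+α)) = (1 - x) ^ (-α) := by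
    rw [show (-α : ℝ) = 1 + -(1+α) by ring, Real.rpow_add hpos, Real.rpow_one]
  rw [hxpow N]
  calc (1 - x ^ N) * (1 - x) ^ (-(1+α)) * x
      = ((∑ j ∈ Finset.range N, x ^ j) * ((1 - x) * (1 - x) ^ (-(1+α)))) * x := by
        rw [hg]; ring
    _ = (∑ j ∈ Finset.range N, x ^ j) * (1 - x) ^ (-α) * x := by rw [hr]
    _ = ∑ j ∈ Finset.range N, x ^ (j+1) * (1 - x) ^ (-α) := by
        rw [Finset.sum_mul, Finset.sum_mul]
        exact Finset.sum_congr rfl fun j _ => by rw [pow_succ]; ring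
    _ = ∑ i ∈ Finset.Icc 1 N, exp (-((i:ℝ)*s)) * (1 - x) ^ (-α) := by
        rw [← Finset.Ico_add_one_right_eq_Icc, Finset.sum_Ico_eq_sum_range]
        exact Finset.sum_congr rfl fun j _ => by rw [hxpow (1+j), add_comm 1 j]

/-- For every `α ∈ (0,1)` and every positive integer `N`,
`∫₀^∞ (1 − e^{−Ns}) (1 − e^{−s})^{−1−α} e^{−s} ds = ∑_{i=1}^{N} B(1−α, i)`.
In particular, when `r` and `k` are positive integers,
`I(r,k) = ∑_{i=1}^{rk} B(1−α, i)`. -/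
theorem stmt_3 (α : ℝ) (hα : α ∈ Ioo (0:ℝ) 1) :
    (∀ N : ℕ, 1 ≤ N →
      (∫ s in Ioi (0:ℝ),
          (1 - exp (-((N : ℝ) * s))) * (1 - exp (-s)) ^ (-(1 + α)) * exp (-s))
        = ∑ i ∈ Finset.Icc 1 N, betaFn (1 - α) (i : ℝ)) ∧
    (∀ r k : ℕ, 1 ≤ r → 1 ≤ k →
      (∫ s in Ioi (0:ℝ),
          (1 - exp (-((r : ℝ) * (k : ℝ) * s))) * (1 - exp (-s)) ^ (-(1 + α)) * exp (-s))
        = ∑ i ∈ Finset.Icc 1 (r * k), betaFn (1 - α) (i : ℝ)) := by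
  have main : ∀ N : ℕ, 1 ≤ N →
      (∫ s in Ioi (0:ℝ),
          (1 - exp (-((N : ℝ) * s))) * (1 - exp (-s)) ^ (-(1 + α)) * exp (-s))
        = ∑ i ∈ Finset.Icc 1 N, betaFn (1 - α) (i : ℝ) := by
    intro N hN
    rw [setIntegral_congr_fun measurableSet_Ioi (pointwise_aux α N)]
    rw [integral_finset_sum _ (fun i hi => beta_eq α hα i (Finset.mem_Icc.mp hi).1 |>.1)]
    exact Finset.sum_congr rfl fun i hi =>
      (beta_eq α hα i (Finset.mem_Icc.mp hi).1).2
  refine ⟨main, fun r k hr hk => ?_⟩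
  have hcast : (r:ℝ) * (k:ℝ) = ((r*k : ℕ) : ℝ) := by push_cast; ring
  rw [show (fun s : ℝ => (1 - exp (-((r : ℝ) * (k : ℝ) * s))) * (1 - exp (-s)) ^ (-(1 + α)) * exp (-s))
      = fun s : ℝ => (1 - exp (-(((r*k : ℕ) : ℝ) * s))) * (1 - exp (-s)) ^ (-(1 + α)) * exp (-s) by
    rw [hcast]]
  exact main (r*k) (Nat.one_le_iff_ne_zero.mpr (by positivity))
end

section
/- For every r > 0 and all integers n ≥ 0 and m ≥ 1, ∑_{j=1}^{m} ∫₀^∞ (1 − e^{−rs}) e^{−r(n+j−1)s} e^{−s} s^{−1} ds = log((1 + (n+m)r)/(1 + nr)). Consequently, under a Gamma process prior the number of new traits displayed in m additional samples after n observed samples is Poisson distributed with parameter θ log((1 + (n+m)r)/(1 + nr)). -/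
open MeasureTheory Real Set Filter

lemma aux_interval_exp (s : ℝ) (hs : 0 < s) (a b : ℝ) :
    ∫ t in a..b, exp (-(t * s)) = (exp (-(a * s)) - exp (-(b * s))) / s := by
  have D : ∀ t : ℝ, HasDerivAt (fun t : ℝ => -exp (-(t * s)) / s) (exp (-(t * s))) t := by
    intro t
    have h := (((hasDerivAt_id t).mul_const s).neg.exp).neg.div_const s
    refine h.congr_deriv ?_
    simp
    field_simp
  rw [intervalIntegral.integral_eq_sub_of_hasDerivAt (fun t _ => D t)
    ((continuous_exp.comp (by fun_prop)).intervalIntegrable a b)]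
  ring

lemma aux_exp_Ioi (t : ℝ) (ht : 0 < t) :
    ∫ s in Ioi (0:ℝ), exp (-(t * s)) = 1 / t := by
  have D : ∀ s : ℝ, HasDerivAt (fun s : ℝ => -exp (-(t * s)) / t) (exp (-(t * s))) s := by
    intro s
    have h := (((hasDerivAt_id s).const_mul t).neg.exp).neg.div_const t
    refine h.congr_deriv ?_
    simp
    field_simp
  have hint : IntegrableOn (fun s : ℝ => exp (-(t * s))) (Ioi 0) := by
    simpa [neg_mul] using exp_neg_integrableOn_Ioi 0 ht
  have hbot : Tendsto (fun s : ℝ => -(t * s)) atTop atBot := by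
    have := Filter.tendsto_id.const_mul_atTop_of_neg (neg_neg_iff_pos.2 ht) (f := fun s : ℝ => s)
    simpa [neg_mul] using this
  have htend : Tendsto (fun s : ℝ => -exp (-(t * s)) / t) atTop (nhds 0) := by
    have := ((tendsto_exp_atBot.comp hbot).neg).div_const t
    simpa using this
  have heval := integral_Ioi_of_hasDerivAt_of_tendsto
    ((D 0).continuousAt.continuousWithinAt) (fun x _ => D x) hint htend
  rw [heval, mul_zero, neg_zero, exp_zero]
  ring

lemma aux_frullani {a b : ℝ} (ha : 0 < a) (hab : a ≤ b) :
    ∫ s in Ioi (0:ℝ), (exp (-(a * s)) - exp (-(b * s))) / s = Real.log (b / a) := by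
  have hb : 0 < b := lt_of_lt_of_le ha hab
  have hF : Integrable (Function.uncurry fun s t : ℝ => exp (-(t * s)))
      ((volume.restrict (Ioi (0:ℝ))).prod (volume.restrict (Ioc a b))) := by
    apply Integrable.mono' (g := fun p : ℝ × ℝ => exp (-(a * p.1)) * 1)
    · have h1 : Integrable (fun s : ℝ => exp (-(a * s))) (volume.restrict (Ioi (0:ℝ))) := by
        have h1' := exp_neg_integrableOn_Ioi 0 ha
        simp only [neg_mul] at h1'
        exact h1'
      have h2 : Integrable (fun _ : ℝ => (1:ℝ)) (volume.restrict (Ioc a b)) :=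
        integrable_const 1
      exact h1.mul_prod h2
    · exact (continuous_exp.comp (by fun_prop)).aestronglyMeasurable
    · rw [Measure.prod_restrict]
      filter_upwards [ae_restrict_mem (measurableSet_Ioi.prod measurableSet_Ioc)] with p hp
      obtain ⟨hp1, hp2⟩ := hp
      simp only [Function.uncurry, Real.norm_eq_abs, abs_of_pos (exp_pos _), mul_one]
      apply exp_le_exp.2
      have : a * p.1 ≤ p.2 * p.1 := mul_le_mul_of_nonneg_right hp2.1.le (le_of_lt hp1)
      linarith
  have swap := integral_integral_swap hF
  have hL : ∫ s in Ioi (0:ℝ), (∫ t in Ioc a b, exp (-(t * s)))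
      = ∫ s in Ioi (0:ℝ), (exp (-(a * s)) - exp (-(b * s))) / s := by
    apply setIntegral_congr_fun measurableSet_Ioi
    intro s hs
    dsimp only
    rw [← intervalIntegral.integral_of_le hab]
    exact aux_interval_exp s hs a b
  have hR : ∫ t in Ioc a b, (∫ s in Ioi (0:ℝ), exp (-(t * s))) = Real.log (b / a) := by
    have h0 : ∫ t in Ioc a b, (∫ s in Ioi (0:ℝ), exp (-(t * s)))
        = ∫ t in Ioc a b, 1 / t := by
      apply setIntegral_congr_fun measurableSet_Ioc
      intro t ht
      dsimp only
      exact aux_exp_Ioi t (lt_of_lt_of_le ha ht.1.le)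
    rw [h0, ← intervalIntegral.integral_of_le hab]
    refine integral_one_div ?_
    rw [uIcc_of_le hab]
    intro h
    exact absurd h.1 (by linarith)
  rw [← hL, ← hR]
  exact swap

/-- For every `r > 0` and all integers `n ≥ 0` and `m ≥ 1`,
`∑_{j=1}^{m} ∫₀^∞ (1 − e^{−rs}) e^{−r(n+j−1)s} e^{−s} s^{−1} ds = log((1 + (n+m)r)/(1 + nr))`.
Consequently, under a Gamma process prior the number of new traits displayed in `m` additional
samples after `n` observed samples is Poisson distributed with parameter
`θ log((1 + (n+m)r)/(1 + nr))`: the Poisson parameter `θ ∑_{j=1}^m φ_{n+j}` equals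
`θ log((1 + (n+m)r)/(1 + nr))`. -/
theorem stmt_7 (r θ : ℝ) (hr : 0 < r) (hθ : 0 < θ) (n m : ℕ) (hm : 1 ≤ m) :
    (∑ j ∈ Finset.Icc 1 m,
        ∫ s in Ioi (0:ℝ),
          (1 - exp (-(r * s))) * exp (-(r * ((n : ℝ) + (j : ℝ) - 1) * s)) * exp (-s) / s)
      = Real.log ((1 + ((n : ℝ) + (m : ℝ)) * r) / (1 + (n : ℝ) * r)) ∧
    θ * (∑ j ∈ Finset.Icc 1 m,
        ∫ s in Ioi (0:ℝ),
          (1 - exp (-(r * s))) * exp (-(r * ((n : ℝ) + (j : ℝ) - 1) * s)) * exp (-s) / s)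
      = θ * Real.log ((1 + ((n : ℝ) + (m : ℝ)) * r) / (1 + (n : ℝ) * r)) := by
  set f : ℕ → ℝ := fun k => Real.log (1 + ((n : ℝ) + (k : ℝ)) * r) with hf
  have key : ∀ j : ℕ, 1 ≤ j →
      (∫ s in Ioi (0:ℝ),
          (1 - exp (-(r * s))) * exp (-(r * ((n : ℝ) + (j : ℝ) - 1) * s)) * exp (-s) / s)
        = Real.log (1 + ((n : ℝ) + (j : ℝ)) * r)
          - Real.log (1 + ((n : ℝ) + (j : ℝ) - 1) * r) := by
    intro j hj
    have hj1 : (1:ℝ) ≤ (j:ℝ) := by exact_mod_cast hj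
    have hn0 : (0:ℝ) ≤ (n:ℝ) := Nat.cast_nonneg n
    have hA0 : 0 < 1 + ((n:ℝ) + (j:ℝ) - 1) * r := by nlinarith
    have hB0 : 0 < 1 + ((n:ℝ) + (j:ℝ)) * r := by nlinarith
    have hAB : 1 + ((n:ℝ) + (j:ℝ) - 1) * r ≤ 1 + ((n:ℝ) + (j:ℝ)) * r := by nlinarith
    have hptwise : ∀ s : ℝ,
        (1 - exp (-(r * s))) * exp (-(r * ((n:ℝ) + (j:ℝ) - 1) * s)) * exp (-s) / s
          = (exp (-((1 + ((n:ℝ) + (j:ℝ) - 1) * r) * s))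
              - exp (-((1 + ((n:ℝ) + (j:ℝ)) * r) * s))) / s := by
      intro s
      congr 1
      rw [sub_mul, one_mul, sub_mul, ← exp_add, ← exp_add, ← exp_add]
      congr 1 <;> · congr 1; ring
    calc (∫ s in Ioi (0:ℝ),
          (1 - exp (-(r * s))) * exp (-(r * ((n:ℝ) + (j:ℝ) - 1) * s)) * exp (-s) / s)
        = ∫ s in Ioi (0:ℝ), (exp (-((1 + ((n:ℝ) + (j:ℝ) - 1) * r) * s))
              - exp (-((1 + ((n:ℝ) + (j:ℝ)) * r) * s))) / s :=
          integral_congr_ae (Filter.Eventually.of_forall hptwise)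
      _ = Real.log ((1 + ((n:ℝ) + (j:ℝ)) * r) / (1 + ((n:ℝ) + (j:ℝ) - 1) * r)) :=
          aux_frullani hA0 hAB
      _ = _ := Real.log_div (by positivity) (by positivity)
  have hsum : (∑ j ∈ Finset.Icc 1 m,
        ∫ s in Ioi (0:ℝ),
          (1 - exp (-(r * s))) * exp (-(r * ((n : ℝ) + (j : ℝ) - 1) * s)) * exp (-s) / s)
      = Real.log ((1 + ((n : ℝ) + (m : ℝ)) * r) / (1 + (n : ℝ) * r)) := by
    have h1 : (∑ j ∈ Finset.Icc 1 m,
        ∫ s in Ioi (0:ℝ),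
          (1 - exp (-(r * s))) * exp (-(r * ((n : ℝ) + (j : ℝ) - 1) * s)) * exp (-s) / s)
        = ∑ i ∈ Finset.range m, (f (i + 1) - f i) := by
      rw [← Finset.Ico_add_one_right_eq_Icc, Finset.sum_Ico_eq_sum_range]
      apply Finset.sum_congr rfl
      intro i _
      rw [key (1 + i) (Nat.le_add_right 1 i), hf]
      push_cast
      ring_nf
    rw [h1, Finset.sum_range_sub f, hf]
    simp only [Nat.cast_zero, add_zero]
    rw [Real.log_div (by positivity) (by positivity)]
  exact ⟨hsum, by rw [hsum]⟩
end
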